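/- arXiv:1402.5833 — 2 statements merged into one kernel-verified Lean document; each statement's English description precedes it below -/
import Mathlib

section
/- Classification of 2-dimensional Lie subalgebras of the lower triangular 2×2 real matrices: let X = E₂₁ and Y = E₂₂. For every two-dimensional subspace P of the lower triangular 2×2 real matrices that is closed under the commutator bracket, there exists an invertible lower triangular g ∈ GL(2,ℝ) such that g P g⁻¹ is exactly one of: span{X, λI + Y} for a unique λ ∈ ℝ; span{I, Y}; or span{I, X}. These representatives are pairwise non-conjugate under invertible lower triangular matrices. -/
/-
Every lower triangular matrix is `a • 1 + d • Y + c • X`, with `1` central and `Y * X - X * Y = X`.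
If `X ∈ P`, then `P` is spanned by `X` and a nonzero diagonal matrix, which rescales to
`l • 1 + Y` or to `1`. If `X ∉ P`, the diagonal is injective on `P`, hence onto `ℝ²`, so `P`
contains `1 + c • X` and `Y + b • X`; their bracket `c • X` has zero diagonal, so `c = 0`, and
conjugation by `1 + b • X` turns `Y + b • X` into `Y`.
Conjugation by a lower triangular matrix fixes the diagonal of a lower triangular matrix; the
diagonals `(l, l + 1)` of `l • 1 + Y` and `(0, 1)` of `Y`, and the nonzero matrix `X` with zero
diagonal, separate the normal forms.
-/

open Matrix

noncomputable def X : Matrix (Fin 2) (Fin 2) ℝ := !![0, 0; 1, 0]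

noncomputable def Y : Matrix (Fin 2) (Fin 2) ℝ := !![0, 0; 0, 1]

/-- The plane spanned by A and B in M₂(ℝ). -/
def plane (A B : Matrix (Fin 2) (Fin 2) ℝ) : Set (Matrix (Fin 2) (Fin 2) ℝ) :=
  {C | ∃ s t : ℝ, C = s • A + t • B}

/-- Conjugation of a set of matrices by g. -/
def mconj (g : Matrix (Fin 2) (Fin 2) ℝ) (S : Set (Matrix (Fin 2) (Fin 2) ℝ)) :
    Set (Matrix (Fin 2) (Fin 2) ℝ) :=
  (fun A => g * A * g⁻¹) '' S

/-- g is an invertible lower triangular matrix. -/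
def lowerUnit (g : Matrix (Fin 2) (Fin 2) ℝ) : Prop := IsUnit g ∧ g 0 1 = 0

local notation "M₂" => Matrix (Fin 2) (Fin 2) ℝ

theorem Submodule.span_pair_eq_of_finrank_eq_two {K V : Type*} [DivisionRing K] [AddCommGroup V]
    [Module K V] {P : Submodule K V} (hP : Module.finrank K P = 2) {x y : V} (hx : x ∈ P)
    (hy : y ∈ P) (hxy : LinearIndependent K ![x, y]) : Submodule.span K {x, y} = P := by
  have : FiniteDimensional K P := Module.finite_of_finrank_eq_succ hP
  refine Submodule.eq_of_le_of_finrank_le (Submodule.span_le.2 ?_) ?_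
  · rintro z (rfl | rfl) <;> assumption
  · rw [hP, ← Matrix.range_cons_cons_empty x y ![], finrank_span_eq_card hxy, Fintype.card_fin]

theorem plane_eq_span (A B : M₂) : plane A B = Submodule.span ℝ {A, B} := by
  ext C
  simp only [plane, Set.mem_ofPred_eq, SetLike.mem_coe, Submodule.mem_span_pair, eq_comm]

theorem left_mem_plane (A B : M₂) : A ∈ plane A B := ⟨1, 0, by simp⟩

theorem right_mem_plane (A B : M₂) : B ∈ plane A B := ⟨0, 1, by simp⟩

theorem coe_eq_plane {P : Submodule ℝ M₂} (hP : Module.finrank ℝ P = 2) {A B : M₂} (hA : A ∈ P)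
    (hB : B ∈ P) (hAB : LinearIndependent ℝ ![A, B]) : (P : Set M₂) = plane A B := by
  rw [plane_eq_span, Submodule.span_pair_eq_of_finrank_eq_two hP hA hB hAB]

theorem mconj_one (S : Set M₂) : mconj 1 S = S := by
  simp [mconj]

theorem mconj_plane (g A B : M₂) : mconj g (plane A B) = plane (g * A * g⁻¹) (g * B * g⁻¹) := by
  let f : M₂ →ₗ[ℝ] M₂ := LinearMap.mulRight ℝ g⁻¹ ∘ₗ LinearMap.mulLeft ℝ g
  change f '' _ = _
  rw [plane_eq_span, plane_eq_span, ← Submodule.map_coe, Submodule.map_span, Set.image_pair]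
  rfl

theorem conj_mem_of_mconj_eq {g M : M₂} {S T : Set M₂} (h : mconj g S = T) (hM : M ∈ S) :
    g * M * g⁻¹ ∈ T :=
  h ▸ Set.mem_image_of_mem _ hM

theorem eq_smul_one_add_smul_Y_add_smul_X {M : M₂} (hM : M 0 1 = 0) :
    M = M 0 0 • 1 + (M 1 1 - M 0 0) • Y + M 1 0 • X := by
  ext i j
  fin_cases i <;> fin_cases j <;> simp [X, Y, hM]

theorem X_ne_zero : X ≠ 0 := fun h => by simpa [X] using congrFun₂ h 1 0

theorem linearIndependent_one_X : LinearIndependent ℝ ![(1 : M₂), X] :=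
  LinearIndependent.pair_iff.2 fun s t h =>
    ⟨by simpa [X] using congrFun₂ h 0 0, by simpa [X] using congrFun₂ h 1 0⟩

theorem linearIndependent_X_smul_one_add_Y (l : ℝ) : LinearIndependent ℝ ![X, l • 1 + Y] := by
  refine LinearIndependent.pair_iff.2 fun s t h => ?_
  have h00 : t * l = 0 := by simpa [X, Y, -mul_eq_zero] using congrFun₂ h 0 0
  have h11 : t * l + t = 0 := by simpa [X, Y] using congrFun₂ h 1 1
  exact ⟨by simpa [X, Y] using congrFun₂ h 1 0, by linarith⟩

theorem linearIndependent_one_Y_add_smul_X (b : ℝ) : LinearIndependent ℝ ![1, Y + b • X] := by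
  refine LinearIndependent.pair_iff.2 fun s t h => ?_
  have hs : s = 0 := by simpa [X, Y] using congrFun₂ h 0 0
  exact ⟨hs, by simpa [X, Y, hs] using congrFun₂ h 1 1⟩

theorem one_add_smul_X_mul_one_sub_smul_X (b : ℝ) : (1 + b • X) * (1 - b • X) = 1 := by
  ext i j
  fin_cases i <;> fin_cases j <;> simp [X, Matrix.mul_apply, Fin.sum_univ_two]

theorem inv_one_add_smul_X (b : ℝ) : (1 + b • X)⁻¹ = 1 - b • X :=
  Matrix.inv_eq_right_inv (one_add_smul_X_mul_one_sub_smul_X b)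

theorem lowerUnit_one_add_smul_X (b : ℝ) : lowerUnit (1 + b • X) :=
  ⟨IsUnit.of_mul_eq_one _ (one_add_smul_X_mul_one_sub_smul_X b), by simp [X]⟩

theorem conj_one_add_smul_X_Y_add_smul_X (b : ℝ) :
    (1 + b • X) * (Y + b • X) * (1 + b • X)⁻¹ = Y := by
  rw [inv_one_add_smul_X]
  ext i j
  fin_cases i <;> fin_cases j <;> simp [X, Y, Matrix.mul_apply, Fin.sum_univ_two]

theorem bracket_Y_add_smul_X_one_add_smul_X (b c : ℝ) :
    (Y + b • X) * (1 + c • X) - (1 + c • X) * (Y + b • X) = c • X := by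
  rw [Matrix.one_fin_two]
  ext i j
  fin_cases i <;> fin_cases j <;> simp [X, Y]

theorem conj_apply_self {g M : M₂} (hg : lowerUnit g) (hM : M 0 1 = 0) (i : Fin 2) :
    (g * M * g⁻¹) i i = M i i := by
  obtain ⟨hu, hg01⟩ := hg
  have hdet : g 0 0 * g 1 1 ≠ 0 := by
    simpa [Matrix.det_fin_two, hg01, isUnit_iff_ne_zero] using
      (Matrix.isUnit_iff_isUnit_det g).1 hu
  obtain ⟨ha, hd⟩ := mul_ne_zero_iff.1 hdet
  rw [Matrix.inv_def, Matrix.adjugate_fin_two, Matrix.det_fin_two, Ring.inverse_eq_inv']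
  fin_cases i <;> simp [Matrix.mul_apply, Fin.sum_univ_two, hg01, hM] <;> field_simp

theorem conj_ne_zero {g M : M₂} (hg : IsUnit g) (hM : M ≠ 0) : g * M * g⁻¹ ≠ 0 := by
  obtain ⟨u, rfl⟩ := hg
  rwa [ne_eq, ← Matrix.coe_units_inv, Units.mul_left_eq_zero, Units.mul_right_eq_zero]

theorem apply_zero_zero_eq_of_mem_plane_one_X {M : M₂} (hM : M ∈ plane 1 X) : M 0 0 = M 1 1 := by
  obtain ⟨s, t, rfl⟩ := hM
  simp [X]

theorem eq_zero_of_mem_plane_one_Y {M : M₂} (hM : M ∈ plane 1 Y) (h0 : M 0 0 = 0)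
    (h1 : M 1 1 = 0) : M = 0 := by
  obtain ⟨s, t, rfl⟩ := hM
  have hs : s = 0 := by simpa [Y] using h0
  have ht : t = 0 := by simpa [Y, hs] using h1
  simp [hs, ht]

theorem mconj_plane_X_ne {l l' : ℝ} (hl : l ≠ l') {g : M₂} (hg : lowerUnit g) :
    mconj g (plane X (l • 1 + Y)) ≠ plane X (l' • 1 + Y) := by
  intro h
  obtain ⟨s, t, hst⟩ := conj_mem_of_mconj_eq h (right_mem_plane X (l • 1 + Y))
  have h00 : l = t * l' := by simpa [conj_apply_self hg, X, Y] using congrFun₂ hst 0 0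
  have h11 : l + 1 = t * l' + t := by simpa [conj_apply_self hg, X, Y] using congrFun₂ hst 1 1
  exact hl (by linear_combination h00 - l' * (h11 - h00))

theorem mconj_plane_X_ne_plane_one_Y (l : ℝ) {g : M₂} (hg : lowerUnit g) :
    mconj g (plane X (l • 1 + Y)) ≠ plane 1 Y := by
  intro h
  have hmem := conj_mem_of_mconj_eq h (left_mem_plane X (l • 1 + Y))
  refine conj_ne_zero hg.1 X_ne_zero (eq_zero_of_mem_plane_one_Y hmem ?_ ?_) <;>
    simp [conj_apply_self hg, X]

theorem mconj_plane_X_ne_plane_one_X (l : ℝ) {g : M₂} (hg : lowerUnit g) :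
    mconj g (plane X (l • 1 + Y)) ≠ plane 1 X := by
  intro h
  have := apply_zero_zero_eq_of_mem_plane_one_X
    (conj_mem_of_mconj_eq h (right_mem_plane X (l • 1 + Y)))
  simp [conj_apply_self hg, Y] at this

theorem mconj_plane_one_Y_ne_plane_one_X {g : M₂} (hg : lowerUnit g) :
    mconj g (plane 1 Y) ≠ plane 1 X := by
  intro h
  have := apply_zero_zero_eq_of_mem_plane_one_X (conj_mem_of_mconj_eq h (right_mem_plane 1 Y))
  simp [conj_apply_self hg, Y] at this

section

variable {P : Submodule ℝ M₂}

theorem eq_zero_of_diag_eq_zero (hlow : ∀ A ∈ P, A 0 1 = 0) (hX : X ∉ P) {M : M₂} (hM : M ∈ P)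
    (hdiag : M.diag = 0) : M = 0 := by
  have h0 : M 0 0 = 0 := congrFun hdiag 0
  have h1 : M 1 1 = 0 := congrFun hdiag 1
  obtain ⟨c, rfl⟩ : ∃ c : ℝ, M = c • X :=
    ⟨M 1 0, by simpa [h0, h1] using eq_smul_one_add_smul_Y_add_smul_X (hlow M hM)⟩
  rcases eq_or_ne c 0 with rfl | hc
  · exact zero_smul ℝ X
  · exact absurd ((P.smul_mem_iff hc).1 hM) hX

theorem exists_mem_diag_eq (hlow : ∀ A ∈ P, A 0 1 = 0) (hP : Module.finrank ℝ P = 2) (hX : X ∉ P)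
    (v : Fin 2 → ℝ) : ∃ M ∈ P, M.diag = v := by
  have : FiniteDimensional ℝ P := Module.finite_of_finrank_eq_succ hP
  let δ : P →ₗ[ℝ] Fin 2 → ℝ := (Matrix.diagLinearMap (Fin 2) ℝ ℝ).domRestrict P
  have hδ : Function.Injective δ := (injective_iff_map_eq_zero δ).2 fun M hM =>
    Subtype.ext (eq_zero_of_diag_eq_zero hlow hX M.2 hM)
  obtain ⟨M, hM⟩ := (LinearMap.injective_iff_surjective_of_finrank_eq_finrank
    (by rw [hP, Module.finrank_fin_fun])).1 hδ v
  exact ⟨M, M.2, hM⟩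

theorem exists_coe_eq_plane_one_of_X_notMem (hlow : ∀ A ∈ P, A 0 1 = 0)
    (hP : Module.finrank ℝ P = 2) (hbr : ∀ A ∈ P, ∀ B ∈ P, A * B - B * A ∈ P) (hX : X ∉ P) :
    ∃ b : ℝ, (P : Set M₂) = plane 1 (Y + b • X) := by
  obtain ⟨E, hE, hEd⟩ := exists_mem_diag_eq hlow hP hX ![1, 1]
  obtain ⟨F, hF, hFd⟩ := exists_mem_diag_eq hlow hP hX ![0, 1]
  obtain ⟨hE0, hE1⟩ : E 0 0 = 1 ∧ E 1 1 = 1 := ⟨congrFun hEd 0, congrFun hEd 1⟩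
  obtain ⟨hF0, hF1⟩ : F 0 0 = 0 ∧ F 1 1 = 1 := ⟨congrFun hFd 0, congrFun hFd 1⟩
  obtain ⟨c, rfl⟩ : ∃ c : ℝ, E = 1 + c • X := ⟨E 1 0, by
    simpa [hE0, hE1] using eq_smul_one_add_smul_Y_add_smul_X (hlow E hE)⟩
  obtain ⟨b, rfl⟩ : ∃ b : ℝ, F = Y + b • X := ⟨F 1 0, by
    simpa [hF0, hF1] using eq_smul_one_add_smul_Y_add_smul_X (hlow F hF)⟩
  have hc : c • X = 0 := by
    refine eq_zero_of_diag_eq_zero hlow hX ?_ ?_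
    · simpa [bracket_Y_add_smul_X_one_add_smul_X] using hbr _ hF _ hE
    · ext i; fin_cases i <;> simp [X]
  rw [hc, add_zero] at hE
  exact ⟨b, coe_eq_plane hP hE hF (linearIndependent_one_Y_add_smul_X b)⟩

theorem coe_eq_plane_of_X_mem (hlow : ∀ A ∈ P, A 0 1 = 0) (hP : Module.finrank ℝ P = 2)
    (hX : X ∈ P) :
    (∃ l : ℝ, (P : Set M₂) = plane X (l • 1 + Y)) ∨ (P : Set M₂) = plane 1 X := by
  have : FiniteDimensional ℝ P := Module.finite_of_finrank_eq_succ hP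
  obtain ⟨A, hA, hAX⟩ : ∃ A ∈ P, A ∉ ℝ ∙ X := SetLike.exists_of_lt <|
    Submodule.lt_of_le_of_finrank_lt_finrank ((Submodule.span_singleton_le_iff_mem _ _).2 hX)
      (by rw [hP, finrank_span_singleton X_ne_zero]; norm_num)
  obtain ⟨a, d, c, rfl⟩ : ∃ a d c : ℝ, A = a • 1 + d • Y + c • X :=
    ⟨_, _, _, eq_smul_one_add_smul_Y_add_smul_X (hlow A hA)⟩
  have hD : a • 1 + d • Y ∈ P := by simpa using P.sub_mem hA (P.smul_mem c hX)
  by_cases hd : d = 0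
  · subst hd
    have ha : a ≠ 0 := by
      rintro rfl
      exact hAX (by simpa using Submodule.smul_mem _ c (Submodule.mem_span_singleton_self X))
    right
    exact coe_eq_plane hP (by simpa [ha] using P.smul_mem a⁻¹ hD) hX linearIndependent_one_X
  · left
    refine ⟨a / d, coe_eq_plane hP hX ?_ (linearIndependent_X_smul_one_add_Y _)⟩
    convert P.smul_mem d⁻¹ hD using 1
    rw [smul_add, smul_smul, smul_smul, inv_mul_cancel₀ hd, one_smul, div_eq_inv_mul]

end

theorem exists_lowerUnit_mconj_eq (P : Submodule ℝ M₂) (hlow : ∀ A ∈ P, A 0 1 = 0)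
    (hP : Module.finrank ℝ P = 2) (hbr : ∀ A ∈ P, ∀ B ∈ P, A * B - B * A ∈ P) :
    ∃ g : M₂, lowerUnit g ∧ ((∃ l : ℝ, mconj g (P : Set M₂) = plane X (l • 1 + Y)) ∨
      mconj g (P : Set M₂) = plane 1 Y ∨ mconj g (P : Set M₂) = plane 1 X) := by
  by_cases hX : X ∈ P
  · refine ⟨1, ⟨isUnit_one, by simp⟩, ?_⟩
    rw [mconj_one]
    exact (coe_eq_plane_of_X_mem hlow hP hX).imp_right Or.inr
  · obtain ⟨b, hb⟩ := exists_coe_eq_plane_one_of_X_notMem hlow hP hbr hX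
    refine ⟨1 + b • X, lowerUnit_one_add_smul_X b, Or.inr (Or.inl ?_)⟩
    rw [hb, mconj_plane, conj_one_add_smul_X_Y_add_smul_X, mul_one,
      Matrix.mul_nonsing_inv _ ((Matrix.isUnit_iff_isUnit_det _).1 (lowerUnit_one_add_smul_X b).1)]

/-- every 2-dimensional Lie subalgebra of the lower triangular 2×2 real
matrices is conjugate, by an invertible lower triangular matrix, to exactly one of
span{X, λI+Y} (unique λ ∈ ℝ), span{I,Y}, span{I,X}. -/
theorem stmt18 :
    (∀ P : Submodule ℝ (Matrix (Fin 2) (Fin 2) ℝ),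
      (∀ A ∈ P, A 0 1 = 0) → Module.finrank ℝ P = 2 →
      (∀ A ∈ P, ∀ B ∈ P, A * B - B * A ∈ P) →
      ∃ g : Matrix (Fin 2) (Fin 2) ℝ, lowerUnit g ∧
        ((∃ l : ℝ, mconj g (P : Set (Matrix (Fin 2) (Fin 2) ℝ)) = plane X (l • 1 + Y)) ∨
          mconj g (P : Set (Matrix (Fin 2) (Fin 2) ℝ)) = plane 1 Y ∨
          mconj g (P : Set (Matrix (Fin 2) (Fin 2) ℝ)) = plane 1 X)) ∧
    (∀ l l' : ℝ, l ≠ l' → ∀ g, lowerUnit g →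
      mconj g (plane X (l • 1 + Y)) ≠ plane X (l' • 1 + Y)) ∧
    (∀ l : ℝ, ∀ g, lowerUnit g → mconj g (plane X (l • 1 + Y)) ≠ plane 1 Y) ∧
    (∀ l : ℝ, ∀ g, lowerUnit g → mconj g (plane X (l • 1 + Y)) ≠ plane 1 X) ∧
    (∀ g, lowerUnit g → mconj g (plane 1 Y) ≠ plane 1 X) :=
  ⟨exists_lowerUnit_mconj_eq,
    fun _ _ hl _ hg => mconj_plane_X_ne hl hg,
    fun l _ hg => mconj_plane_X_ne_plane_one_Y l hg,
    fun l _ hg => mconj_plane_X_ne_plane_one_X l hg,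
    fun _ hg => mconj_plane_one_Y_ne_plane_one_X hg⟩
end

section
/- Classification of lines of diagonal matrices: let σ₋₁ = [[0,1],[1,0]]. For every one-dimensional subspace ℓ of the space of diagonal 2×2 real matrices, there exist a unique β ∈ [−1,1] and a matrix g ∈ GL(2,ℝ) satisfying ᵗg⁻¹ σ₋₁ g⁻¹ ∈ ℝ·σ₋₁ such that g ℓ g⁻¹ = ℝ·diag(1, β); moreover for β ≠ β′ in [−1,1], no g ∈ GL(2,ℝ) with ᵗg⁻¹ σ₋₁ g⁻¹ ∈ ℝ·σ₋₁ conjugates ℝ·diag(1,β) onto ℝ·diag(1,β′). -/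
/-!
If `ᵗg⁻¹ σ₋₁ g⁻¹ = c σ₋₁` then `c ᵗg σ₋₁ g = σ₋₁`. The diagonal entries of `ᵗg σ₋₁ g` are
`2 g₀₀ g₁₀` and `2 g₀₁ g₁₁`, so with `det g ≠ 0` such a `g` is diagonal or antidiagonal, and
conjugation by it either fixes `diag(x, y)` or swaps it to `diag(y, x)`. Rescaling, every line of
diagonal matrices is conjugate to `ℝ·diag(1, β)` with `|β| ≤ 1` (swapping first if the second
entry dominates). Conversely `ℝ·diag(1, β)` and `ℝ·diag(1, β')` can only be conjugate when
`β = β'` or `β β' = 1`, and on `[-1, 1]` the latter also forces `β = β'`.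
-/

open Matrix

/-- The line ℝ·A in M₂(ℝ). -/
def line (A : Matrix (Fin 2) (Fin 2) ℝ) : Set (Matrix (Fin 2) (Fin 2) ℝ) :=
  {B | ∃ t : ℝ, B = t • A}

/-- g ∈ GL(2,ℝ) preserves the line ℝ·σ₋₁ under the action g†(σ) = ᵗg⁻¹σg⁻¹,
where σ₋₁ = [[0,1],[1,0]]. -/
def presAntidiag (g : Matrix (Fin 2) (Fin 2) ℝ) : Prop :=
  IsUnit g ∧ ∃ c : ℝ, (gᵀ)⁻¹ * !![(0 : ℝ), 1; 1, 0] * g⁻¹ = c • !![(0 : ℝ), 1; 1, 0]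

local notation "σ₋₁" => !![(0 : ℝ), 1; 1, 0]

lemma line_smul_of_ne_zero {c : ℝ} (hc : c ≠ 0) (A : Matrix (Fin 2) (Fin 2) ℝ) :
    line (c • A) = line A := by
  ext B
  constructor
  · rintro ⟨t, rfl⟩
    exact ⟨t * c, by rw [smul_smul]⟩
  · rintro ⟨t, rfl⟩
    exact ⟨t / c, by rw [smul_smul, div_mul_cancel₀ _ hc]⟩

lemma mconj_line (g A : Matrix (Fin 2) (Fin 2) ℝ) :
    mconj g (line A) = line (g * A * g⁻¹) := by
  ext B
  constructor
  · rintro ⟨C, ⟨t, rfl⟩, rfl⟩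
    exact ⟨t, by dsimp only; rw [Matrix.mul_smul, Matrix.smul_mul]⟩
  · rintro ⟨t, rfl⟩
    exact ⟨t • A, ⟨t, rfl⟩, by dsimp only; rw [Matrix.mul_smul, Matrix.smul_mul]⟩

lemma Submodule.exists_coe_eq_line_of_finrank_eq_one
    {ℓ : Submodule ℝ (Matrix (Fin 2) (Fin 2) ℝ)} (h : Module.finrank ℝ ℓ = 1) :
    ∃ A ∈ ℓ, A ≠ 0 ∧ (ℓ : Set (Matrix (Fin 2) (Fin 2) ℝ)) = line A := by
  obtain ⟨v, hv0, hv⟩ := finrank_eq_one_iff'.mp h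
  refine ⟨v, v.2, by simpa using hv0, Set.ext fun B => ⟨fun hB => ?_, ?_⟩⟩
  · obtain ⟨c, hc⟩ := hv ⟨B, hB⟩
    exact ⟨c, congrArg Subtype.val hc.symm⟩
  · rintro ⟨t, rfl⟩
    exact ℓ.smul_mem t v.2

lemma line_diag_eq_line_diag_one_div {a b : ℝ} (ha : a ≠ 0) :
    line !![a, 0; 0, b] = line !![1, 0; 0, b / a] := by
  have : !![a, 0; 0, b] = a • !![(1 : ℝ), 0; 0, b / a] := by
    ext i j
    fin_cases i <;> fin_cases j <;> simp [mul_div_cancel₀ _ ha]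
  rw [this, line_smul_of_ne_zero ha]

lemma div_mem_Icc_of_abs_le {K : Type*} [Field K] [LinearOrder K] [IsStrictOrderedRing K]
    {a b : K} (ha : a ≠ 0) (hba : |b| ≤ |a|) :
    b / a ∈ Set.Icc (-1 : K) 1 := by
  rw [Set.mem_Icc, ← abs_le, abs_div]
  exact (div_le_one (abs_pos.2 ha)).2 hba

lemma eq_of_mul_eq_one_of_mem_Icc {K : Type*} [Field K] [LinearOrder K] [IsStrictOrderedRing K]
    {β β' : K} (hβ : β ∈ Set.Icc (-1 : K) 1) (hβ' : β' ∈ Set.Icc (-1 : K) 1) (h : β * β' = 1) :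
    β = β' := by
  obtain ⟨hβl, hβr⟩ := hβ
  obtain ⟨hβ'l, hβ'r⟩ := hβ'
  nlinarith [sq_nonneg (β - β')]

lemma exists_eq_mul_of_line_diag_eq {x y β : ℝ}
    (h : line !![x, 0; 0, y] = line !![(1 : ℝ), 0; 0, β]) :
    ∃ t : ℝ, x = t ∧ y = t * β := by
  obtain ⟨t, ht⟩ : !![x, 0; 0, y] ∈ line !![(1 : ℝ), 0; 0, β] :=
    h ▸ ⟨1, (one_smul _ _).symm⟩
  exact ⟨t, by simpa using congrFun (congrFun ht 0) 0,
    by simpa using congrFun (congrFun ht 1) 1⟩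

lemma conj_diag_of_offDiag_eq_zero {R : Type*} [CommRing R] {g : Matrix (Fin 2) (Fin 2) R}
    (hg : IsUnit g.det) (h01 : g 0 1 = 0) (h10 : g 1 0 = 0) (x y : R) :
    g * !![x, 0; 0, y] * g⁻¹ = !![x, 0; 0, y] := by
  have hcomm : g * !![x, 0; 0, y] = !![x, 0; 0, y] * g := by
    ext i j
    fin_cases i <;> fin_cases j <;> simp [Matrix.mul_apply, h01, h10, mul_comm]
  rw [hcomm, mul_nonsing_inv_cancel_right _ _ hg]

lemma conj_diag_of_diag_eq_zero {R : Type*} [CommRing R] {g : Matrix (Fin 2) (Fin 2) R}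
    (hg : IsUnit g.det) (h00 : g 0 0 = 0) (h11 : g 1 1 = 0) (x y : R) :
    g * !![x, 0; 0, y] * g⁻¹ = !![y, 0; 0, x] := by
  have hcomm : g * !![x, 0; 0, y] = !![y, 0; 0, x] * g := by
    ext i j
    fin_cases i <;> fin_cases j <;> simp [Matrix.mul_apply, h00, h11, mul_comm]
  rw [hcomm, mul_nonsing_inv_cancel_right _ _ hg]

lemma isUnit_det_antidiag : IsUnit (σ₋₁).det := by
  simp [det_fin_two_of]

lemma presAntidiag_one : presAntidiag 1 := ⟨isUnit_one, 1, by simp⟩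

lemma presAntidiag_antidiag : presAntidiag σ₋₁ := by
  have hsq : σ₋₁ * σ₋₁ = 1 := by
    ext i j
    fin_cases i <;> fin_cases j <;> simp
  have hsymm : (σ₋₁)ᵀ = σ₋₁ := by
    ext i j
    fin_cases i <;> fin_cases j <;> rfl
  refine ⟨(isUnit_iff_isUnit_det _).2 isUnit_det_antidiag, 1, ?_⟩
  rw [hsymm, inv_eq_right_inv hsq, Matrix.mul_assoc, hsq, Matrix.mul_one, one_smul]

lemma offDiag_eq_zero_or_diag_eq_zero {R : Type*} [CommRing R] [NoZeroDivisors R] {a b c d : R}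
    (hac : a * c = 0) (hbd : b * d = 0) (hdet : a * d - b * c ≠ 0) :
    (b = 0 ∧ c = 0) ∨ (a = 0 ∧ d = 0) := by
  rcases mul_eq_zero.1 hac with rfl | rfl <;> rcases mul_eq_zero.1 hbd with rfl | rfl <;> simp_all

lemma transpose_mul_antidiag_mul (g : Matrix (Fin 2) (Fin 2) ℝ) :
    gᵀ * σ₋₁ * g = !![2 * (g 0 0 * g 1 0), g 0 0 * g 1 1 + g 0 1 * g 1 0;
      g 0 0 * g 1 1 + g 0 1 * g 1 0, 2 * (g 0 1 * g 1 1)] := by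
  ext i j
  fin_cases i <;> fin_cases j <;> simp [Matrix.mul_apply] <;> ring

lemma presAntidiag.offDiag_eq_zero_or_diag_eq_zero {g : Matrix (Fin 2) (Fin 2) ℝ}
    (h : presAntidiag g) : (g 0 1 = 0 ∧ g 1 0 = 0) ∨ (g 0 0 = 0 ∧ g 1 1 = 0) := by
  obtain ⟨hu, c, hc⟩ := h
  have hdet : IsUnit g.det := (isUnit_iff_isUnit_det g).1 hu
  have hdetT : IsUnit gᵀ.det := by rwa [det_transpose]
  have key : c • (gᵀ * σ₋₁ * g) = σ₋₁ := by
    rw [← Matrix.smul_mul, ← Matrix.mul_smul, ← hc, Matrix.mul_assoc, Matrix.mul_assoc,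
      nonsing_inv_mul _ hdet, Matrix.mul_one, ← Matrix.mul_assoc, mul_nonsing_inv _ hdetT,
      Matrix.one_mul]
  rw [transpose_mul_antidiag_mul] at key
  have e00 : c * (2 * (g 0 0 * g 1 0)) = 0 := by simpa using congrFun (congrFun key 0) 0
  have e01 : c * (g 0 0 * g 1 1 + g 0 1 * g 1 0) = 1 := by simpa using congrFun (congrFun key 0) 1
  have e11 : c * (2 * (g 0 1 * g 1 1)) = 0 := by simpa using congrFun (congrFun key 1) 1
  have hc0 : c ≠ 0 := by rintro rfl; simp at e01
  have hdet' : g 0 0 * g 1 1 - g 0 1 * g 1 0 ≠ 0 := by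
    rw [← det_fin_two]; exact hdet.ne_zero
  refine _root_.offDiag_eq_zero_or_diag_eq_zero ?_ ?_ hdet'
  · simpa [hc0] using e00
  · simpa [hc0] using e11

lemma presAntidiag.eq_of_mconj_line_diag_eq {g : Matrix (Fin 2) (Fin 2) ℝ} (hg : presAntidiag g)
    {β β' : ℝ} (hβ : β ∈ Set.Icc (-1 : ℝ) 1) (hβ' : β' ∈ Set.Icc (-1 : ℝ) 1)
    (h : mconj g (line !![(1 : ℝ), 0; 0, β]) = line !![(1 : ℝ), 0; 0, β']) : β = β' := by
  rw [mconj_line] at h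
  have hdet := (isUnit_iff_isUnit_det g).1 hg.1
  rcases hg.offDiag_eq_zero_or_diag_eq_zero with ⟨h01, h10⟩ | ⟨h00, h11⟩
  · rw [conj_diag_of_offDiag_eq_zero hdet h01 h10] at h
    obtain ⟨t, rfl, ht⟩ := exists_eq_mul_of_line_diag_eq h
    simpa using ht
  · rw [conj_diag_of_diag_eq_zero hdet h00 h11] at h
    obtain ⟨t, rfl, ht⟩ := exists_eq_mul_of_line_diag_eq h
    exact eq_of_mul_eq_one_of_mem_Icc hβ hβ' ht.symm

lemma exists_presAntidiag_mconj_line_diag_eq {a b : ℝ} (hab : a ≠ 0 ∨ b ≠ 0) :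
    ∃ β ∈ Set.Icc (-1 : ℝ) 1, ∃ g : Matrix (Fin 2) (Fin 2) ℝ, presAntidiag g ∧
      mconj g (line !![a, 0; 0, b]) = line !![(1 : ℝ), 0; 0, β] := by
  rcases le_or_gt |b| |a| with hba | hab'
  · have ha : a ≠ 0 := by
      rintro rfl
      exact hab.elim (· rfl) fun hb => hb (abs_nonpos_iff.1 (by simpa using hba))
    refine ⟨b / a, div_mem_Icc_of_abs_le ha hba, 1, presAntidiag_one, ?_⟩
    rw [mconj_line, inv_one, Matrix.one_mul, Matrix.mul_one, line_diag_eq_line_diag_one_div ha]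
  · have hb : b ≠ 0 := by
      rintro rfl
      exact (abs_nonneg a).not_gt (by simpa using hab')
    refine ⟨a / b, div_mem_Icc_of_abs_le hb hab'.le, σ₋₁, presAntidiag_antidiag, ?_⟩
    rw [mconj_line, conj_diag_of_diag_eq_zero isUnit_det_antidiag rfl rfl,
      line_diag_eq_line_diag_one_div hb]

/-- every line of diagonal 2×2 matrices is conjugate, by some g ∈ GL(2,ℝ)
preserving ℝ·σ₋₁, to ℝ·diag(1,β) for a unique β ∈ [−1,1], and different β ∈ [−1,1] give
non-conjugate lines. -/
theorem stmt19 :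
    (∀ ℓ : Submodule ℝ (Matrix (Fin 2) (Fin 2) ℝ),
      (∀ A ∈ ℓ, A 0 1 = 0 ∧ A 1 0 = 0) → Module.finrank ℝ ℓ = 1 →
      ∃ β : ℝ, β ∈ Set.Icc (-1 : ℝ) 1 ∧
        ∃ g : Matrix (Fin 2) (Fin 2) ℝ, presAntidiag g ∧
          mconj g (ℓ : Set (Matrix (Fin 2) (Fin 2) ℝ)) = line !![(1 : ℝ), 0; 0, β]) ∧
    (∀ β β' : ℝ, β ∈ Set.Icc (-1 : ℝ) 1 → β' ∈ Set.Icc (-1 : ℝ) 1 → β ≠ β' →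
      ∀ g : Matrix (Fin 2) (Fin 2) ℝ, presAntidiag g →
        mconj g (line !![(1 : ℝ), 0; 0, β]) ≠ line !![(1 : ℝ), 0; 0, β']) := by
  refine ⟨fun ℓ hdiag hrank => ?_,
    fun β β' hβ hβ' hne g hg h => hne (hg.eq_of_mconj_line_diag_eq hβ hβ' h)⟩
  obtain ⟨A, hAℓ, hA0, hℓ⟩ := ℓ.exists_coe_eq_line_of_finrank_eq_one hrank
  obtain ⟨h01, h10⟩ := hdiag A hAℓ
  have hA : A = !![A 0 0, 0; 0, A 1 1] := by simpa [h01, h10] using eta_fin_two A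
  have hA' : A 0 0 ≠ 0 ∨ A 1 1 ≠ 0 := by
    by_contra! h
    exact hA0 (by ext i j; fin_cases i <;> fin_cases j <;> simp [h.1, h.2, h01, h10])
  rw [hℓ, hA]
  exact exists_presAntidiag_mconj_line_diag_eq hA'
end
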